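/- Let E_n, H_n, D_n, B_n, E_m, H_m, D_m, B_m : ℝ² → ℂ³ be smooth compactly supported profile fields and k_n ≠ k_m real constants such that the fields e_j(r) = E_j(x,y) e^{i k_j z} etc. satisfy ∇×e_j = iω b_j, ∇×h_j = −iω d_j, with d_j = ε₀ ε e_j for a Hermitian-matrix-valued function ε(x,y) and b_j = μ₀ h_j, ω > 0. Then ∫_{ℝ²} [conj(E_n) × H_m + E_m × conj(H_n)]_z dx dy = 0. -/

import Mathlib

open MeasureTheory Complex Matrix

/-- Bilinear (unconjugated) dot product on ℂ³. -/
noncomputable def cdot (X Y : Fin 3 → ℂ) : ℂ := ∑ i, X i * Y i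

/-- Cross product on ℂ³ (bilinear extension of the real one). -/
noncomputable def ccross (X Y : Fin 3 → ℂ) : Fin 3 → ℂ :=
  ![X 1 * Y 2 - X 2 * Y 1, X 2 * Y 0 - X 0 * Y 2, X 0 * Y 1 - X 1 * Y 0]

/-- Partial derivative along coordinate `i` on ℝ³. -/
noncomputable def pd {E : Type*} [NormedAddCommGroup E] [NormedSpace ℝ E]
    (i : Fin 3) (f : (Fin 3 → ℝ) → E) (p : Fin 3 → ℝ) : E :=
  fderiv ℝ f p (Pi.single i 1)

/-- Divergence of a vector field on ℝ³. -/
noncomputable def div3 (F : (Fin 3 → ℝ) → Fin 3 → ℂ) (p : Fin 3 → ℝ) : ℂ :=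
  ∑ i, pd i (fun q => F q i) p

/-- Curl of a vector field on ℝ³. -/
noncomputable def curl3 (F : (Fin 3 → ℝ) → Fin 3 → ℂ) (p : Fin 3 → ℝ) : Fin 3 → ℂ :=
  ![pd 1 (fun q => F q 2) p - pd 2 (fun q => F q 1) p,
    pd 2 (fun q => F q 0) p - pd 0 (fun q => F q 2) p,
    pd 0 (fun q => F q 1) p - pd 1 (fun q => F q 0) p]

/-- Modal field from a transverse profile. -/
noncomputable def modal (P : ℝ × ℝ → Fin 3 → ℂ) (k : ℂ) : (Fin 3 → ℝ) → Fin 3 → ℂ :=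
  fun p i => P (p 0, p 1) i * Complex.exp (Complex.I * k * (p 2 : ℂ))

/-- Componentwise complex conjugation. -/
noncomputable def cconj (X : Fin 3 → ℂ) : Fin 3 → ℂ := fun i => (starRingEnd ℂ) (X i)

/-- The ⊙-product. -/
noncomputable def odot (X Y : Fin 3 → ℂ) : ℂ := (X 0 * Y 0 + X 1 * Y 1 - X 2 * Y 2) / 2



section EnergyOrthogonalityAux

/-! ### Auxiliary lemmas -/

lemma slice_cs_fst {g : ℝ × ℝ → ℂ} (hg : HasCompactSupport g) (y : ℝ) :
    HasCompactSupport (fun x => g (x, y)) := by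
  apply HasCompactSupport.intro (hg.image continuous_fst)
  intro x hx
  by_contra h
  exact hx ⟨(x, y), subset_tsupport g (Function.mem_support.mpr h), rfl⟩

lemma slice_cs_snd {g : ℝ × ℝ → ℂ} (hg : HasCompactSupport g) (x : ℝ) :
    HasCompactSupport (fun y => g (x, y)) := by
  apply HasCompactSupport.intro (hg.image continuous_snd)
  intro y hy
  by_contra h
  exact hy ⟨(x, y), subset_tsupport g (Function.mem_support.mpr h), rfl⟩

lemma deriv_cs {f : ℝ × ℝ → ℂ} (hf : ContDiff ℝ (⊤ : ℕ∞) f) (hs : HasCompactSupport f) (v : ℝ × ℝ) :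
    Continuous (fun q => fderiv ℝ f q v) ∧ HasCompactSupport (fun q => fderiv ℝ f q v) := by
  constructor
  · exact (hf.continuous_fderiv (by simp)).clm_apply continuous_const
  · exact (hs.fderiv ℝ).comp_left (g := fun L : (ℝ × ℝ) →L[ℝ] ℂ => L v) rfl

lemma integral_Dx_zero {f : ℝ × ℝ → ℂ} (hf : ContDiff ℝ (⊤ : ℕ∞) f) (hs : HasCompactSupport f) :
    ∫ q : ℝ × ℝ, fderiv ℝ f q (1, 0) = 0 := by
  obtain ⟨hcont, hcs⟩ := deriv_cs hf hs (1, 0)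
  have hint : Integrable (fun q : ℝ × ℝ => fderiv ℝ f q (1, 0)) :=
    hcont.integrable_of_hasCompactSupport hcs
  have key : ∀ y : ℝ, ∫ x : ℝ, fderiv ℝ f (x, y) (1, 0) = 0 := by
    intro y
    apply integral_eq_zero_of_hasDerivAt_of_integrable
      (f := fun x => f (x, y))
    · intro x
      exact ((hf.differentiable (by simp)) (x, y)).hasFDerivAt.comp_hasDerivAt x
        ((hasDerivAt_id x).prodMk (hasDerivAt_const x y))
    · exact ((hcont.comp (continuous_id.prodMk continuous_const)).integrable_of_hasCompactSupport
        (slice_cs_fst hcs y))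
    · exact (((hf.continuous).comp
        (continuous_id.prodMk continuous_const)).integrable_of_hasCompactSupport
        (slice_cs_fst hs y))
  have swap : ∫ q : ℝ × ℝ, fderiv ℝ f q (1, 0)
      = ∫ y : ℝ, ∫ x : ℝ, fderiv ℝ f (x, y) (1, 0) := by
    rw [Measure.volume_eq_prod]
    have hint2 : Integrable (Function.uncurry fun y x => fderiv ℝ f (x, y) (1, 0))
        (volume.prod volume) := by
      exact ((Measure.volume_eq_prod ℝ ℝ) ▸ hint).swap
    rw [integral_integral_symm hint2]
  rw [swap]
  simp [key]

lemma integral_Dy_zero {f : ℝ × ℝ → ℂ} (hf : ContDiff ℝ (⊤ : ℕ∞) f) (hs : HasCompactSupport f) :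
    ∫ q : ℝ × ℝ, fderiv ℝ f q (0, 1) = 0 := by
  obtain ⟨hcont, hcs⟩ := deriv_cs hf hs (0, 1)
  have hint : Integrable (fun q : ℝ × ℝ => fderiv ℝ f q (0, 1)) :=
    hcont.integrable_of_hasCompactSupport hcs
  have key : ∀ x : ℝ, ∫ y : ℝ, fderiv ℝ f (x, y) (0, 1) = 0 := by
    intro x
    apply integral_eq_zero_of_hasDerivAt_of_integrable
      (f := fun y => f (x, y))
    · intro y
      exact ((hf.differentiable (by simp)) (x, y)).hasFDerivAt.comp_hasDerivAt y
        ((hasDerivAt_const y x).prodMk (hasDerivAt_id y))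
    · exact ((hcont.comp (continuous_const.prodMk continuous_id)).integrable_of_hasCompactSupport
        (slice_cs_snd hcs x))
    · exact (((hf.continuous).comp
        (continuous_const.prodMk continuous_id)).integrable_of_hasCompactSupport
        (slice_cs_snd hs x))
  have swap : ∫ q : ℝ × ℝ, fderiv ℝ f q (0, 1)
      = ∫ x : ℝ, ∫ y : ℝ, fderiv ℝ f (x, y) (0, 1) := by
    rw [Measure.volume_eq_prod]
    have hint2 : Integrable (Function.uncurry fun x y => fderiv ℝ f (x, y) (0, 1))
        (volume.prod volume) := by
      exact (Measure.volume_eq_prod ℝ ℝ) ▸ hint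
    rw [integral_integral hint2]
  rw [swap]
  simp [key]

noncomputable def emb (q : ℝ × ℝ) : Fin 3 → ℝ := ![q.1, q.2, 0]

noncomputable def pr12 : (Fin 3 → ℝ) →L[ℝ] ℝ × ℝ :=
  (ContinuousLinearMap.proj 0).prod (ContinuousLinearMap.proj 1)

noncomputable def pr3 : (Fin 3 → ℝ) →L[ℝ] ℂ :=
  Complex.ofRealCLM.comp (ContinuousLinearMap.proj 2)

lemma comp_smooth {P : ℝ × ℝ → Fin 3 → ℂ} (hP : ContDiff ℝ (⊤ : ℕ∞) P) (j : Fin 3) :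
    ContDiff ℝ (⊤ : ℕ∞) (fun r => P r j) :=
  (ContinuousLinearMap.proj (R := ℝ) (φ := fun _ : Fin 3 => ℂ) j).contDiff.comp hP

lemma modal_hasFDerivAt (P : ℝ × ℝ → Fin 3 → ℂ) (hP : ContDiff ℝ (⊤ : ℕ∞) P) (k : ℝ) (j : Fin 3)
    (p : Fin 3 → ℝ) :
    HasFDerivAt (fun p' => modal P (k : ℂ) p' j)
      (P (p 0, p 1) j •
          (Complex.exp (Complex.I * k * ((p 2 : ℝ) : ℂ)) • ((Complex.I * k) • pr3))
        + Complex.exp (Complex.I * k * ((p 2 : ℝ) : ℂ)) •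
          ((fderiv ℝ (fun r => P r j) (p 0, p 1)).comp pr12)) p := by
  have hPj : DifferentiableAt ℝ (fun r => P r j) (p 0, p 1) :=
    ((comp_smooth hP j).differentiable (by simp)) _
  have h1 : HasFDerivAt (fun p' : Fin 3 → ℝ => P (p' 0, p' 1) j)
      ((fderiv ℝ (fun r => P r j) (p 0, p 1)).comp pr12) p :=
    by have := hPj.hasFDerivAt.comp p pr12.hasFDerivAt; exact this
  have h2i : HasFDerivAt (fun p' : Fin 3 → ℝ => Complex.I * k * ((p' 2 : ℝ) : ℂ))
      ((Complex.I * k) • pr3) p := pr3.hasFDerivAt.const_mul (Complex.I * k)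
  exact h1.mul h2i.cexp

lemma modal_emb (P : ℝ × ℝ → Fin 3 → ℂ) (k : ℝ) (j : Fin 3) (q : ℝ × ℝ) :
    modal P (k : ℂ) (emb q) j = P q j := by
  simp [modal, emb]

lemma pd_modal0 (P : ℝ × ℝ → Fin 3 → ℂ) (hP : ContDiff ℝ (⊤ : ℕ∞) P) (k : ℝ) (j : Fin 3) (q : ℝ × ℝ) :
    pd 0 (fun p => modal P (k : ℂ) p j) (emb q) = fderiv ℝ (fun r => P r j) q (1, 0) := by
  rw [pd, (modal_hasFDerivAt P hP k j (emb q)).fderiv]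
  simp [emb, pr3, pr12, Pi.single_apply, Prod.ext_iff]

lemma pd_modal1 (P : ℝ × ℝ → Fin 3 → ℂ) (hP : ContDiff ℝ (⊤ : ℕ∞) P) (k : ℝ) (j : Fin 3) (q : ℝ × ℝ) :
    pd 1 (fun p => modal P (k : ℂ) p j) (emb q) = fderiv ℝ (fun r => P r j) q (0, 1) := by
  rw [pd, (modal_hasFDerivAt P hP k j (emb q)).fderiv]
  simp [emb, pr3, pr12, Pi.single_apply, Prod.ext_iff]

lemma pd_modal2 (P : ℝ × ℝ → Fin 3 → ℂ) (hP : ContDiff ℝ (⊤ : ℕ∞) P) (k : ℝ) (j : Fin 3) (q : ℝ × ℝ) :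
    pd 2 (fun p => modal P (k : ℂ) p j) (emb q) = Complex.I * k * P q j := by
  rw [pd, (modal_hasFDerivAt P hP k j (emb q)).fderiv]
  simp [emb, pr3, pr12, Pi.single_apply, Prod.ext_iff]
  simp only [Prod.mk_zero_zero, map_zero, add_zero]
  ring

lemma curl_extract (X : ℝ × ℝ → Fin 3 → ℂ) (hX : ContDiff ℝ (⊤ : ℕ∞) X) (k : ℝ)
    (R : ℝ × ℝ → Fin 3 → ℂ) (c : ℂ)
    (hc : ∀ p, curl3 (modal X (k : ℂ)) p = fun i => c * modal R (k : ℂ) p i) (q : ℝ × ℝ) :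
    (fderiv ℝ (fun r => X r 2) q (0, 1) - Complex.I * k * X q 1 = c * R q 0) ∧
    (Complex.I * k * X q 0 - fderiv ℝ (fun r => X r 2) q (1, 0) = c * R q 1) ∧
    (fderiv ℝ (fun r => X r 1) q (1, 0) - fderiv ℝ (fun r => X r 0) q (0, 1) = c * R q 2) := by
  refine ⟨?_, ?_, ?_⟩
  · have h := congrFun (hc (emb q)) 0
    simp only [curl3, Matrix.cons_val_zero] at h
    rwa [pd_modal1 X hX k 2 q, pd_modal2 X hX k 1 q, modal_emb] at h
  · have h := congrFun (hc (emb q)) 1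
    simp only [curl3, Matrix.cons_val_one, Matrix.head_cons] at h
    rwa [pd_modal2 X hX k 0 q, pd_modal0 X hX k 2 q, modal_emb] at h
  · have h := congrFun (hc (emb q)) 2
    simp only [curl3, Matrix.cons_val_two, Matrix.tail_cons, Matrix.head_cons] at h
    rwa [pd_modal0 X hX k 1 q, pd_modal1 X hX k 0 q, modal_emb] at h

lemma hasFDerivAt_conj {a : ℝ × ℝ → ℂ} {q : ℝ × ℝ} (ha : DifferentiableAt ℝ a q) :
    HasFDerivAt (fun r => (starRingEnd ℂ) (a r))
      ((Complex.conjCLE.toContinuousLinearMap).comp (fderiv ℝ a q)) q := by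
  have h := Complex.conjCLE.toContinuousLinearMap.hasFDerivAt.comp q ha.hasFDerivAt
  exact h

lemma fderiv_combo (a b c d e f g h : ℝ × ℝ → ℂ) (q : ℝ × ℝ)
    (ha : DifferentiableAt ℝ a q) (hb : DifferentiableAt ℝ b q)
    (hc : DifferentiableAt ℝ c q) (hd : DifferentiableAt ℝ d q)
    (he : DifferentiableAt ℝ e q) (hf : DifferentiableAt ℝ f q)
    (hg : DifferentiableAt ℝ g q) (hh : DifferentiableAt ℝ h q) (v : ℝ × ℝ) :
    fderiv ℝ (fun r => ((starRingEnd ℂ) (a r) * b r - (starRingEnd ℂ) (c r) * d r)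
        + (e r * (starRingEnd ℂ) (f r) - g r * (starRingEnd ℂ) (h r))) q v
    = ((starRingEnd ℂ) (fderiv ℝ a q v) * b q + (starRingEnd ℂ) (a q) * fderiv ℝ b q v
        - ((starRingEnd ℂ) (fderiv ℝ c q v) * d q + (starRingEnd ℂ) (c q) * fderiv ℝ d q v))
      + (fderiv ℝ e q v * (starRingEnd ℂ) (f q) + e q * (starRingEnd ℂ) (fderiv ℝ f q v)
        - (fderiv ℝ g q v * (starRingEnd ℂ) (h q) + g q * (starRingEnd ℂ) (fderiv ℝ h q v))) := by
  have H := ((((hasFDerivAt_conj ha).mul hb.hasFDerivAt).sub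
      ((hasFDerivAt_conj hc).mul hd.hasFDerivAt)).add
      ((he.hasFDerivAt.mul (hasFDerivAt_conj hf)).sub
      (hg.hasFDerivAt.mul (hasFDerivAt_conj hh))))
  have H' : HasFDerivAt (fun r => ((starRingEnd ℂ) (a r) * b r - (starRingEnd ℂ) (c r) * d r)
      + (e r * (starRingEnd ℂ) (f r) - g r * (starRingEnd ℂ) (h r))) _ q := H
  rw [H'.fderiv]
  simp [ContinuousLinearMap.add_apply, ContinuousLinearMap.sub_apply,
    ContinuousLinearMap.smul_apply, ContinuousLinearMap.comp_apply, smul_eq_mul,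
    Complex.conjCLE_apply]
  ring

end EnergyOrthogonalityAux

/-- energy orthogonality of two nondegenerate guided modes of a lossless
anisotropic waveguide: `∫_{ℝ²} [conj(E_n) × H_m + E_m × conj(H_n)]_z = 0`. -/
theorem energy_orthogonality
    (En Hn Dn Bn Em Hm Dm Bm : ℝ × ℝ → Fin 3 → ℂ)
    (kn km ω ε₀ μ₀ : ℝ)
    (ε : ℝ × ℝ → Matrix (Fin 3) (Fin 3) ℂ)
    (hεH : ∀ q, (ε q)ᴴ = ε q)
    (hω : 0 < ω) (hε₀ : 0 < ε₀) (hμ₀ : 0 < μ₀) (hk : kn ≠ km)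
    (hEn : ContDiff ℝ (⊤ : ℕ∞) En ∧ HasCompactSupport En)
    (hHn : ContDiff ℝ (⊤ : ℕ∞) Hn ∧ HasCompactSupport Hn)
    (hDn : ContDiff ℝ (⊤ : ℕ∞) Dn ∧ HasCompactSupport Dn)
    (hBn : ContDiff ℝ (⊤ : ℕ∞) Bn ∧ HasCompactSupport Bn)
    (hmatDn : ∀ q, Dn q = (ε₀ : ℂ) • (ε q).mulVec (En q))
    (hmatBn : ∀ q, Bn q = (μ₀ : ℂ) • Hn q)
    (hcurlEn : ∀ p, curl3 (modal En (kn : ℂ)) p = fun i => Complex.I * ω * modal Bn (kn : ℂ) p i)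
    (hcurlHn : ∀ p, curl3 (modal Hn (kn : ℂ)) p = fun i => -(Complex.I * ω) * modal Dn (kn : ℂ) p i)
    (hEm : ContDiff ℝ (⊤ : ℕ∞) Em ∧ HasCompactSupport Em)
    (hHm : ContDiff ℝ (⊤ : ℕ∞) Hm ∧ HasCompactSupport Hm)
    (hDm : ContDiff ℝ (⊤ : ℕ∞) Dm ∧ HasCompactSupport Dm)
    (hBm : ContDiff ℝ (⊤ : ℕ∞) Bm ∧ HasCompactSupport Bm)
    (hmatDm : ∀ q, Dm q = (ε₀ : ℂ) • (ε q).mulVec (Em q))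
    (hmatBm : ∀ q, Bm q = (μ₀ : ℂ) • Hm q)
    (hcurlEm : ∀ p, curl3 (modal Em (km : ℂ)) p = fun i => Complex.I * ω * modal Bm (km : ℂ) p i)
    (hcurlHm : ∀ p, curl3 (modal Hm (km : ℂ)) p = fun i => -(Complex.I * ω) * modal Dm (km : ℂ) p i) :
    (∫ q : ℝ × ℝ, (ccross (cconj (En q)) (Hm q) 2 + ccross (Em q) (cconj (Hn q)) 2)) = 0 := by
  have smooth_conj : ∀ (f : ℝ × ℝ → ℂ), ContDiff ℝ (⊤ : ℕ∞) f →
      ContDiff ℝ (⊤ : ℕ∞) (fun r => (starRingEnd ℂ) (f r)) := fun f hf =>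
    Complex.conjCLE.toContinuousLinearMap.contDiff.comp hf
  have cs_comp : ∀ (P : ℝ × ℝ → Fin 3 → ℂ), HasCompactSupport P → ∀ j : Fin 3,
      HasCompactSupport (fun r => (starRingEnd ℂ) (P r j)) := fun P hP j =>
    hP.comp_left (g := fun v : Fin 3 → ℂ => (starRingEnd ℂ) (v j)) (by simp)
  have cs_comp' : ∀ (P : ℝ × ℝ → Fin 3 → ℂ), HasCompactSupport P → ∀ j : Fin 3,
      HasCompactSupport (fun r => P r j) := fun P hP j =>
    hP.comp_left (g := fun v : Fin 3 → ℂ => v j) rfl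
  have cs_sub : ∀ {u v : ℝ × ℝ → ℂ}, HasCompactSupport u → HasCompactSupport v →
      HasCompactSupport (fun r => u r - v r) := fun hu hv =>
    hu.comp₂_left hv (sub_zero 0)
  have cs_add : ∀ {u v : ℝ × ℝ → ℂ}, HasCompactSupport u → HasCompactSupport v →
      HasCompactSupport (fun r => u r + v r) := fun hu hv =>
    hu.comp₂_left hv (add_zero 0)
  have dE : ∀ (P : ℝ × ℝ → Fin 3 → ℂ), ContDiff ℝ (⊤ : ℕ∞) P → ∀ (j : Fin 3) (q : ℝ × ℝ),
      DifferentiableAt ℝ (fun r => P r j) q := fun P hP j q =>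
    ((comp_smooth hP j).differentiable (by simp)) q
  have hF0s : ContDiff ℝ (⊤ : ℕ∞) (fun r => ((starRingEnd ℂ) (En r 1) * Hm r 2 - (starRingEnd ℂ) (En r 2) * Hm r 1)
      + (Em r 1 * (starRingEnd ℂ) (Hn r 2) - Em r 2 * (starRingEnd ℂ) (Hn r 1))) :=
    (((smooth_conj _ (comp_smooth hEn.1 1)).mul (comp_smooth hHm.1 2)).sub
      ((smooth_conj _ (comp_smooth hEn.1 2)).mul (comp_smooth hHm.1 1))).add
      (((comp_smooth hEm.1 1).mul (smooth_conj _ (comp_smooth hHn.1 2))).sub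
      ((comp_smooth hEm.1 2).mul (smooth_conj _ (comp_smooth hHn.1 1))))
  have hF1s : ContDiff ℝ (⊤ : ℕ∞) (fun r => ((starRingEnd ℂ) (En r 2) * Hm r 0 - (starRingEnd ℂ) (En r 0) * Hm r 2)
      + (Em r 2 * (starRingEnd ℂ) (Hn r 0) - Em r 0 * (starRingEnd ℂ) (Hn r 2))) :=
    (((smooth_conj _ (comp_smooth hEn.1 2)).mul (comp_smooth hHm.1 0)).sub
      ((smooth_conj _ (comp_smooth hEn.1 0)).mul (comp_smooth hHm.1 2))).add
      (((comp_smooth hEm.1 2).mul (smooth_conj _ (comp_smooth hHn.1 0))).sub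
      ((comp_smooth hEm.1 0).mul (smooth_conj _ (comp_smooth hHn.1 2))))
  have hF0c : HasCompactSupport (fun r => ((starRingEnd ℂ) (En r 1) * Hm r 2 - (starRingEnd ℂ) (En r 2) * Hm r 1)
      + (Em r 1 * (starRingEnd ℂ) (Hn r 2) - Em r 2 * (starRingEnd ℂ) (Hn r 1))) :=
    cs_add (cs_sub ((cs_comp En hEn.2 1).mul_right) ((cs_comp En hEn.2 2).mul_right))
      (cs_sub ((cs_comp' Em hEm.2 1).mul_right) ((cs_comp' Em hEm.2 2).mul_right))
  have hF1c : HasCompactSupport (fun r => ((starRingEnd ℂ) (En r 2) * Hm r 0 - (starRingEnd ℂ) (En r 0) * Hm r 2)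
      + (Em r 2 * (starRingEnd ℂ) (Hn r 0) - Em r 0 * (starRingEnd ℂ) (Hn r 2))) :=
    cs_add (cs_sub ((cs_comp En hEn.2 2).mul_right) ((cs_comp En hEn.2 0).mul_right))
      (cs_sub ((cs_comp' Em hEm.2 2).mul_right) ((cs_comp' Em hEm.2 0).mul_right))
  have key : ∀ q : ℝ × ℝ,
      fderiv ℝ (fun r => ((starRingEnd ℂ) (En r 1) * Hm r 2 - (starRingEnd ℂ) (En r 2) * Hm r 1)
      + (Em r 1 * (starRingEnd ℂ) (Hn r 2) - Em r 2 * (starRingEnd ℂ) (Hn r 1))) q (1, 0) + fderiv ℝ (fun r => ((starRingEnd ℂ) (En r 2) * Hm r 0 - (starRingEnd ℂ) (En r 0) * Hm r 2)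
      + (Em r 2 * (starRingEnd ℂ) (Hn r 0) - Em r 0 * (starRingEnd ℂ) (Hn r 2))) q (0, 1)
      = -(Complex.I * ((km : ℂ) - (kn : ℂ))) *
        (((starRingEnd ℂ) (En q 0) * Hm q 1 - (starRingEnd ℂ) (En q 1) * Hm q 0)
          + (Em q 0 * (starRingEnd ℂ) (Hn q 1) - Em q 1 * (starRingEnd ℂ) (Hn q 0))) := by
    intro q
    have hε : ∀ i j : Fin 3, (starRingEnd ℂ) (ε q i j) = ε q j i := by
      intro i j
      have h2 := congrFun (congrFun (hεH q) j) i
      simpa [Matrix.conjTranspose_apply, Complex.star_def] using h2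
    obtain ⟨en0, en1, en2⟩ := curl_extract En hEn.1 kn Bn (Complex.I * ω) hcurlEn q
    obtain ⟨hn0, hn1, hn2⟩ := curl_extract Hn hHn.1 kn Dn (-(Complex.I * ω)) hcurlHn q
    obtain ⟨em0, em1, em2⟩ := curl_extract Em hEm.1 km Bm (Complex.I * ω) hcurlEm q
    obtain ⟨hm0, hm1, hm2⟩ := curl_extract Hm hHm.1 km Dm (-(Complex.I * ω)) hcurlHm q
    simp only [hmatBn q, hmatBm q, hmatDn q, hmatDm q, Pi.smul_apply, smul_eq_mul,
      Matrix.mulVec, dotProduct, Fin.sum_univ_three]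
      at en0 en1 en2 hn0 hn1 hn2 em0 em1 em2 hm0 hm1 hm2
    have cen0 := congrArg (starRingEnd ℂ) en0
    have cen1 := congrArg (starRingEnd ℂ) en1
    have cen2 := congrArg (starRingEnd ℂ) en2
    have chn0 := congrArg (starRingEnd ℂ) hn0
    have chn1 := congrArg (starRingEnd ℂ) hn1
    have chn2 := congrArg (starRingEnd ℂ) hn2
    simp only [_root_.map_sub, _root_.map_add, _root_.map_mul, _root_.map_neg, Complex.conj_I,
      Complex.conj_ofReal, hε] at cen0 cen1 cen2 chn0 chn1 chn2
    have hx := fderiv_combo (fun r => En r 1) (fun r => Hm r 2) (fun r => En r 2)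
      (fun r => Hm r 1) (fun r => Em r 1) (fun r => Hn r 2) (fun r => Em r 2) (fun r => Hn r 1) q
      (dE En hEn.1 1 q) (dE Hm hHm.1 2 q) (dE En hEn.1 2 q) (dE Hm hHm.1 1 q)
      (dE Em hEm.1 1 q) (dE Hn hHn.1 2 q) (dE Em hEm.1 2 q) (dE Hn hHn.1 1 q) (1, 0)
    have hy := fderiv_combo (fun r => En r 2) (fun r => Hm r 0) (fun r => En r 0)
      (fun r => Hm r 2) (fun r => Em r 2) (fun r => Hn r 0) (fun r => Em r 0) (fun r => Hn r 2) q
      (dE En hEn.1 2 q) (dE Hm hHm.1 0 q) (dE En hEn.1 0 q) (dE Hm hHm.1 2 q)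
      (dE Em hEm.1 2 q) (dE Hn hHn.1 0 q) (dE Em hEm.1 0 q) (dE Hn hHn.1 2 q) (0, 1)
    beta_reduce at hx hy
    rw [hx, hy]
    linear_combination (Hm q 0) * cen0 + (Hm q 1) * cen1 + (Hm q 2) * cen2
      - ((starRingEnd ℂ) (En q 0)) * hm0 - ((starRingEnd ℂ) (En q 1)) * hm1
      - ((starRingEnd ℂ) (En q 2)) * hm2
      + ((starRingEnd ℂ) (Hn q 0)) * em0 + ((starRingEnd ℂ) (Hn q 1)) * em1
      + ((starRingEnd ℂ) (Hn q 2)) * em2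
      - (Em q 0) * chn0 - (Em q 1) * chn1 - (Em q 2) * chn2
  have hc0 : (-(Complex.I * ((km : ℂ) - (kn : ℂ)))) ≠ 0 := by
    have hne : (km : ℂ) ≠ (kn : ℂ) := by exact_mod_cast hk.symm
    exact neg_ne_zero.mpr (mul_ne_zero Complex.I_ne_zero (sub_ne_zero.mpr hne))
  have hrw : (fun q : ℝ × ℝ => ccross (cconj (En q)) (Hm q) 2 + ccross (Em q) (cconj (Hn q)) 2)
      = fun q : ℝ × ℝ => (-(Complex.I * ((km : ℂ) - (kn : ℂ))))⁻¹ •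
          (fderiv ℝ (fun r => ((starRingEnd ℂ) (En r 1) * Hm r 2 - (starRingEnd ℂ) (En r 2) * Hm r 1)
      + (Em r 1 * (starRingEnd ℂ) (Hn r 2) - Em r 2 * (starRingEnd ℂ) (Hn r 1))) q (1, 0) + fderiv ℝ (fun r => ((starRingEnd ℂ) (En r 2) * Hm r 0 - (starRingEnd ℂ) (En r 0) * Hm r 2)
      + (Em r 2 * (starRingEnd ℂ) (Hn r 0) - Em r 0 * (starRingEnd ℂ) (Hn r 2))) q (0, 1)) := by
    funext q
    rw [key q, smul_eq_mul, inv_mul_cancel_left₀ hc0]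
    simp [ccross, cconj]
  rw [hrw, integral_smul]
  have i0 := integral_Dx_zero hF0s hF0c
  have i1 := integral_Dy_zero hF1s hF1c
  obtain ⟨c0, s0⟩ := deriv_cs hF0s hF0c (1, 0)
  obtain ⟨c1, s1⟩ := deriv_cs hF1s hF1c (0, 1)
  rw [integral_add (c0.integrable_of_hasCompactSupport s0) (c1.integrable_of_hasCompactSupport s1),
    i0, i1]
  simp
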